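/- Let α, ε ∈ (0,1), let P₁, P₂ be n×n row-stochastic matrices and r₁, r₂ ∈ ℝⁿ reward vectors with (r₁)_k ∈ [0,1] for all k, and let i ∈ {1,…,n}. Assume: (A1) for all k, ℓ, (P₁)_{kℓ} > 0 ↔ (P₂)_{kℓ} > 0; (A2) for all k, ℓ with (P₁)_{kℓ} > 0 and (P₂)_{kℓ} > 0, max((P₁)_{kℓ}/(P₂)_{kℓ}, (P₂)_{kℓ}/(P₁)_{kℓ}) − 1 ≤ ε/(8n); (A3) for all k, |(r₁)_k − (r₂)_k| ≤ ε/2. Then, writing v₁ = (I − α·P₁)⁻¹ *ᵥ r₁ and v₂ = (I − α·P₂)⁻¹ *ᵥ r₂, one has (1−α)·|(v₁)_i − (v₂)_i| ≤ ε. -/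

import Mathlib

open Matrix

/-!
Let `μ j = (1 - α) * (1 - α • P)⁻¹ i j`, the normalised discounted occupancy measure of the chain
started at `i`: it is a probability vector and `(1 - α) * v i = ∑ j, μ j * r j`. So it suffices
that entrywise ratios `1 + δ`, `δ = ε / (8 n)`, between `P₁` and `P₂` give ratios
`(1 + δ) ^ (2 n) ≤ 1 + ε / 2` between the two occupancy measures, uniformly in `α`; changing the
rewards costs another `ε / 2`.

Write `(1 - α • P)⁻¹ = adj / det` and expand row `k` of `1 - α • P` as
`∑ l, P k l • (e k - α • e l)`. By multilinearity, `det` and each adjugate entry become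
homogeneous polynomials of degree `n` in the entries of `P`, whose coefficients are the
determinant, resp. adjugate entries, of `1 - α • S` for 0/1 stochastic `S`. These are nonnegative:
a minimum principle makes `(1 - α • S)⁻¹` entrywise nonnegative, and the determinant cannot change
sign along `s ↦ 1 - s • S`, `s ∈ [0, α]`. Hence `det` and `adj` change by a factor at most
`(1 + δ) ^ n` each.
-/

namespace DiscountedMarkov

variable {ι : Type*}

section RowExpansion

variable [DecidableEq ι]
variable {κ : Type*} [Fintype κ]

lemma updateRow_of_sum_smul {R : Type*} [CommRing R] {w : ι → κ → R} {j : ι}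
    (hw : ∑ o, w j o = 1) (v : ι → κ → ι → R) (b : ι → R) :
    updateRow (of fun k => ∑ o, w k o • v k o) j b =
      of fun k => ∑ o, w k o • Function.update v j (fun _ => b) k o := by
  ext k : 1
  by_cases hk : k = j
  · subst hk
    simp [← Finset.sum_mul, hw]
  · simp [hk]

variable [Fintype ι]

lemma det_of_sum_smul {R : Type*} [CommRing R] (w : ι → κ → R) (v : ι → κ → ι → R) :
    det (of fun k => ∑ o, w k o • v k o) =
      ∑ c : ι → κ, (∏ k, w k (c k)) * det (of fun k => v k (c k)) := by
  change detRowAlternating.toMultilinearMap (fun k => ∑ o, w k o • v k o) = _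
  rw [MultilinearMap.map_sum]
  exact Finset.sum_congr rfl fun c _ => MultilinearMap.map_smul_univ _ _ _

lemma det_of_sum_smul_le {w₁ w₂ : ι → κ → ℝ} {v : ι → κ → ι → ℝ} {K : ℝ}
    (hv : ∀ c : ι → κ, 0 ≤ det (of fun k => v k (c k))) (hw₁ : ∀ k o, 0 ≤ w₁ k o)
    (hw : ∀ k o, w₁ k o ≤ K * w₂ k o) :
    det (of fun k => ∑ o, w₁ k o • v k o) ≤
      K ^ Fintype.card ι * det (of fun k => ∑ o, w₂ k o • v k o) := by
  rw [det_of_sum_smul, det_of_sum_smul, Finset.mul_sum]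
  refine Finset.sum_le_sum fun c _ => ?_
  calc (∏ k, w₁ k (c k)) * det (of fun k => v k (c k))
      ≤ (∏ k, K * w₂ k (c k)) * det (of fun k => v k (c k)) :=
        mul_le_mul_of_nonneg_right
          (Finset.prod_le_prod (fun k _ => hw₁ k (c k)) fun k _ => hw k (c k)) (hv c)
    _ = K ^ Fintype.card ι * ((∏ k, w₂ k (c k)) * det (of fun k => v k (c k))) := by
        rw [Finset.prod_mul_distrib, Finset.prod_const, Finset.card_univ, mul_assoc]

end RowExpansion

section Resolvent

variable [Fintype ι] [DecidableEq ι] {P : Matrix ι ι ℝ} (hP : P ∈ rowStochastic ℝ ι) {a : ℝ}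
  (ha0 : 0 ≤ a) (ha1 : a < 1)
include hP ha0 ha1

/-- Minimum principle: at a negative minimum `x m`, `x m ≥ a * (P *ᵥ x) m ≥ a * x m > x m`. -/
lemma nonneg_of_one_sub_smul_mulVec_nonneg {x : ι → ℝ} (hx : ∀ k, 0 ≤ ((1 - a • P) *ᵥ x) k)
    (k : ι) : 0 ≤ x k := by
  by_contra! hk
  have : Nonempty ι := ⟨k⟩
  obtain ⟨m, hm⟩ := Finite.exists_min x
  have hrow : ((1 - a • P) *ᵥ x) m = x m - a * (P *ᵥ x) m := by
    rw [sub_mulVec, one_mulVec, smul_mulVec, Pi.sub_apply, Pi.smul_apply, smul_eq_mul]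
  have hmean : x m ≤ (P *ᵥ x) m :=
    calc x m = ∑ l, P m l * x m := by
          rw [← Finset.sum_mul, sum_row_of_mem_rowStochastic hP, one_mul]
      _ ≤ (P *ᵥ x) m := Finset.sum_le_sum fun l _ =>
          mul_le_mul_of_nonneg_left (hm l) (nonneg_of_mem_rowStochastic hP)
  nlinarith [hx m, (hm k).trans_lt hk]

lemma det_one_sub_smul_ne_zero : (1 - a • P).det ≠ 0 := by
  intro h
  obtain ⟨x, hx0, hx⟩ := exists_mulVec_eq_zero_iff.mpr h
  refine hx0 (funext fun k => le_antisymm ?_ ?_)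
  · simpa using nonneg_of_one_sub_smul_mulVec_nonneg hP ha0 ha1 (x := -x)
      (by simp [mulVec_neg, hx]) k
  · exact nonneg_of_one_sub_smul_mulVec_nonneg hP ha0 ha1 (by simp [hx]) k

lemma det_one_sub_smul_pos : 0 < (1 - a • P).det := by
  by_contra! hneg
  have hcont : ContinuousOn (fun s : ℝ => (1 - s • P).det) (Set.Icc 0 a) :=
    (Continuous.matrix_det (by fun_prop)).continuousOn
  obtain ⟨s, ⟨hs0, hsa⟩, hs⟩ := intermediate_value_Icc' ha0 hcont ⟨hneg, by simp⟩
  exact det_one_sub_smul_ne_zero hP hs0 (hsa.trans_lt ha1) hs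

lemma inv_one_sub_smul_nonneg (k l : ι) : 0 ≤ (1 - a • P)⁻¹ k l := by
  have hunit : IsUnit (1 - a • P).det := (det_one_sub_smul_ne_zero hP ha0 ha1).isUnit
  simpa [mulVec_single] using nonneg_of_one_sub_smul_mulVec_nonneg hP ha0 ha1
    (x := (1 - a • P)⁻¹ *ᵥ Pi.single l 1) (fun k => by
      rw [mulVec_mulVec, mul_nonsing_inv _ hunit, one_mulVec]
      by_cases h : k = l <;> simp [h]) k

lemma adjugate_one_sub_smul_nonneg (k l : ι) : 0 ≤ (1 - a • P).adjugate k l := by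
  have hdet := det_one_sub_smul_pos hP ha0 ha1
  have hadj : (1 - a • P).adjugate = (1 - a • P).det • (1 - a • P)⁻¹ := by
    rw [inv_def, smul_smul, Ring.inverse_eq_inv', mul_inv_cancel₀ hdet.ne', one_smul]
  rw [hadj, Matrix.smul_apply, smul_eq_mul]
  exact mul_nonneg hdet.le (inv_one_sub_smul_nonneg hP ha0 ha1 k l)

end Resolvent

section JumpExpansion

variable [DecidableEq ι]

/-- Row `k` of `1 - a • P` when the chain jumps from `k` to `l` with probability one. -/
def jumpRow (a : ℝ) (k l : ι) : ι → ℝ := Pi.single k 1 - a • Pi.single l 1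

lemma of_jumpRow (a : ℝ) (c : ι → ι) :
    (of fun k => jumpRow a k (c k)) = 1 - a • (1 : Matrix ι ι ℝ).submatrix c id := by
  ext k q
  simp [jumpRow, one_apply, Pi.single_apply, eq_comm]

variable [Fintype ι]

lemma one_sub_smul_eq_of_jumpRow {P : Matrix ι ι ℝ} (hP : ∀ k, ∑ l, P k l = 1) (a : ℝ) :
    1 - a • P = of fun k => ∑ l, P k l • jumpRow a k l := by
  ext k q
  simp [jumpRow, Finset.sum_apply, mul_sub, Finset.sum_sub_distrib, hP,
    one_apply, Pi.single_apply, eq_comm, mul_comm]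

lemma submatrix_one_mem_rowStochastic (c : ι → ι) :
    (1 : Matrix ι ι ℝ).submatrix c id ∈ rowStochastic ℝ ι := by
  refine mem_rowStochastic_iff_sum.mpr ⟨fun k l => ?_, fun k => ?_⟩
  · simp only [submatrix_apply, id, one_apply]; split_ifs <;> norm_num
  · simp [one_apply]

variable {P₁ P₂ : Matrix ι ι ℝ} (hP₁ : P₁ ∈ rowStochastic ℝ ι) (hP₂ : ∀ k, ∑ l, P₂ k l = 1)
  {a K : ℝ} (ha0 : 0 ≤ a) (ha1 : a < 1) (hK : ∀ k l, P₁ k l ≤ K * P₂ k l)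
include hP₁ hP₂ ha0 ha1 hK

lemma det_one_sub_smul_le :
    (1 - a • P₁).det ≤ K ^ Fintype.card ι * (1 - a • P₂).det := by
  rw [one_sub_smul_eq_of_jumpRow (sum_row_of_mem_rowStochastic hP₁),
    one_sub_smul_eq_of_jumpRow hP₂]
  refine det_of_sum_smul_le (fun c => ?_) (fun k l => nonneg_of_mem_rowStochastic hP₁) hK
  rw [of_jumpRow]
  exact (det_one_sub_smul_pos (submatrix_one_mem_rowStochastic c) ha0 ha1).le

lemma adjugate_one_sub_smul_le (i j : ι) :
    (1 - a • P₁).adjugate i j ≤ K ^ Fintype.card ι * (1 - a • P₂).adjugate i j := by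
  simp only [adjugate_apply]
  rw [one_sub_smul_eq_of_jumpRow (sum_row_of_mem_rowStochastic hP₁),
    one_sub_smul_eq_of_jumpRow hP₂, updateRow_of_sum_smul (sum_row_of_mem_rowStochastic hP₁ j),
    updateRow_of_sum_smul (hP₂ j)]
  refine det_of_sum_smul_le (fun c => ?_) (fun k l => nonneg_of_mem_rowStochastic hP₁) hK
  have hrows : (of fun k => Function.update (jumpRow a) j (fun _ => Pi.single i 1) k (c k)) =
      updateRow (of fun k => jumpRow a k (c k)) j (Pi.single i 1) := by
    ext k : 1
    by_cases hk : k = j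
    · subst hk; simp
    · simp [hk]
  rw [hrows, of_jumpRow, ← adjugate_apply]
  exact adjugate_one_sub_smul_nonneg (submatrix_one_mem_rowStochastic c) ha0 ha1 i j

end JumpExpansion

section Occupancy

variable [Fintype ι] [DecidableEq ι]

noncomputable def occupancy (a : ℝ) (P : Matrix ι ι ℝ) (i : ι) : ι → ℝ :=
  fun j => (1 - a) * (1 - a • P)⁻¹ i j

lemma one_sub_mul_inv_mulVec_apply (a : ℝ) (P : Matrix ι ι ℝ) (r : ι → ℝ) (i : ι) :
    (1 - a) * ((1 - a • P)⁻¹ *ᵥ r) i = occupancy a P i ⬝ᵥ r := by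
  simp only [mulVec, dotProduct, occupancy, Finset.mul_sum, mul_assoc]

section

variable {P : Matrix ι ι ℝ} (hP : P ∈ rowStochastic ℝ ι) {a : ℝ} (ha0 : 0 ≤ a) (ha1 : a < 1)
include hP ha0 ha1

lemma occupancy_nonneg (i j : ι) : 0 ≤ occupancy a P i j :=
  mul_nonneg (sub_nonneg.mpr ha1.le) (inv_one_sub_smul_nonneg hP ha0 ha1 i j)

lemma sum_occupancy (i : ι) : ∑ j, occupancy a P i j = 1 := by
  have hunit : IsUnit (1 - a • P).det := (det_one_sub_smul_ne_zero hP ha0 ha1).isUnit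
  have hfix : (1 - a • P) *ᵥ 1 = (1 - a) • 1 := by
    rw [sub_mulVec, one_mulVec, smul_mulVec, one_vecMul_of_mem_rowStochastic hP, sub_smul,
      one_smul]
  have := congrFun (congrArg ((1 - a • P)⁻¹ *ᵥ ·) hfix) i
  rw [mulVec_mulVec, nonsing_inv_mul _ hunit, one_mulVec, mulVec_smul] at this
  simpa [occupancy, mulVec, dotProduct, Finset.mul_sum] using this.symm

end

lemma inv_one_sub_smul_le_pow_mul {P₁ P₂ : Matrix ι ι ℝ} (hP₁ : P₁ ∈ rowStochastic ℝ ι)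
    (hP₂ : P₂ ∈ rowStochastic ℝ ι) {a K : ℝ} (ha0 : 0 ≤ a) (ha1 : a < 1)
    (h₁₂ : ∀ k l, P₁ k l ≤ K * P₂ k l) (h₂₁ : ∀ k l, P₂ k l ≤ K * P₁ k l) (i j : ι) :
    (1 - a • P₁)⁻¹ i j ≤ K ^ (2 * Fintype.card ι) * (1 - a • P₂)⁻¹ i j := by
  have hd₁ := det_one_sub_smul_pos hP₁ ha0 ha1
  have hd₂ := det_one_sub_smul_pos hP₂ ha0 ha1
  have hA := adjugate_one_sub_smul_le hP₁ (sum_row_of_mem_rowStochastic hP₂) ha0 ha1 h₁₂ i j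
  have hd := det_one_sub_smul_le hP₂ (sum_row_of_mem_rowStochastic hP₁) ha0 ha1 h₂₁
  have hD : 0 < K ^ Fintype.card ι := pos_of_mul_pos_left (hd₂.trans_le hd) hd₁.le
  have hinv (P : Matrix ι ι ℝ) :
      (1 - a • P)⁻¹ i j = (1 - a • P).adjugate i j / (1 - a • P).det := by
    rw [inv_def, Ring.inverse_eq_inv', Matrix.smul_apply, smul_eq_mul, inv_mul_eq_div]
  rw [hinv, hinv, pow_mul']
  calc (1 - a • P₁).adjugate i j / (1 - a • P₁).det
      ≤ K ^ Fintype.card ι * (1 - a • P₂).adjugate i j / ((1 - a • P₂).det / K ^ Fintype.card ι) :=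
        div_le_div₀ (mul_nonneg hD.le (adjugate_one_sub_smul_nonneg hP₂ ha0 ha1 i j)) hA
          (div_pos hd₂ hD) ((div_le_iff₀ hD).mpr (by linarith))
    _ = (K ^ Fintype.card ι) ^ 2 * ((1 - a • P₂).adjugate i j / (1 - a • P₂).det) := by
        field_simp

lemma occupancy_le_pow_mul {P₁ P₂ : Matrix ι ι ℝ} (hP₁ : P₁ ∈ rowStochastic ℝ ι)
    (hP₂ : P₂ ∈ rowStochastic ℝ ι) {a K : ℝ} (ha0 : 0 ≤ a) (ha1 : a < 1)
    (h₁₂ : ∀ k l, P₁ k l ≤ K * P₂ k l) (h₂₁ : ∀ k l, P₂ k l ≤ K * P₁ k l) (i j : ι) :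
    occupancy a P₁ i j ≤ K ^ (2 * Fintype.card ι) * occupancy a P₂ i j := by
  rw [occupancy, occupancy, mul_left_comm]
  exact mul_le_mul_of_nonneg_left (inv_one_sub_smul_le_pow_mul hP₁ hP₂ ha0 ha1 h₁₂ h₂₁ i j)
    (sub_nonneg.mpr ha1.le)

end Occupancy

section ProbabilityVectors

variable [Fintype ι] {μ ν : ι → ℝ} (hν : ∀ j, 0 ≤ ν j) (hν1 : ∑ j, ν j = 1)
include hν hν1

lemma dotProduct_sub_le_of_le_mul {r : ι → ℝ} (hr : ∀ j, r j ∈ Set.Icc (0 : ℝ) 1) {K : ℝ}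
    (hK : 1 ≤ K) (hμν : ∀ j, μ j ≤ K * ν j) : μ ⬝ᵥ r - ν ⬝ᵥ r ≤ K - 1 := by
  have hpt : ∀ j, (μ j - ν j) * r j ≤ (K - 1) * ν j := fun j => by
    obtain ⟨hr0, hr1⟩ := hr j
    rcases le_total (μ j) (ν j) with h | h
    · nlinarith [hν j, mul_nonneg (sub_nonneg.mpr h) hr0]
    · nlinarith [hμν j, mul_nonneg (sub_nonneg.mpr h) (sub_nonneg.mpr hr1)]
  calc μ ⬝ᵥ r - ν ⬝ᵥ r = ∑ j, (μ j - ν j) * r j := by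
        simp only [dotProduct, ← Finset.sum_sub_distrib, sub_mul]
    _ ≤ ∑ j, (K - 1) * ν j := Finset.sum_le_sum fun j _ => hpt j
    _ = K - 1 := by rw [← Finset.mul_sum, hν1, mul_one]

lemma abs_dotProduct_sub_le {r₁ r₂ : ι → ℝ} {c : ℝ} (hr : ∀ j, |r₁ j - r₂ j| ≤ c) :
    |ν ⬝ᵥ r₁ - ν ⬝ᵥ r₂| ≤ c :=
  calc |ν ⬝ᵥ r₁ - ν ⬝ᵥ r₂| = |∑ j, ν j * (r₁ j - r₂ j)| := by
        rw [← dotProduct_sub]; rfl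
    _ ≤ ∑ j, |ν j * (r₁ j - r₂ j)| := Finset.abs_sum_le_sum_abs _ _
    _ ≤ ∑ j, ν j * c := Finset.sum_le_sum fun j _ => by
        rw [abs_mul, abs_of_nonneg (hν j)]
        exact mul_le_mul_of_nonneg_left (hr j) (hν j)
    _ = c := by rw [← Finset.sum_mul, hν1, one_mul]

end ProbabilityVectors

lemma le_one_add_mul_of_max_div_sub_one_le {x y δ : ℝ} (hx : 0 ≤ x) (hy : 0 ≤ y)
    (hxy : 0 < x ↔ 0 < y) (h : 0 < x → 0 < y → max (x / y) (y / x) - 1 ≤ δ) :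
    x ≤ (1 + δ) * y ∧ y ≤ (1 + δ) * x := by
  rcases hx.eq_or_lt with rfl | hx
  · obtain rfl : y = 0 := le_antisymm (not_lt.mp fun hy' => lt_irrefl 0 (hxy.mpr hy')) hy
    simp
  · have hy := hxy.mp hx
    have hmax := h hx hy
    constructor
    · rw [← div_le_iff₀ hy]; linarith [le_max_left (x / y) (y / x)]
    · rw [← div_le_iff₀ hx]; linarith [le_max_right (x / y) (y / x)]

lemma one_add_div_pow_le {ε : ℝ} (hε0 : 0 < ε) (hε1 : ε < 1) {n : ℕ} (hn : 0 < n) :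
    (1 + ε / (8 * n)) ^ (2 * n) ≤ 1 + ε / 2 :=
  calc (1 + ε / (8 * n)) ^ (2 * n) ≤ Real.exp (ε / (8 * n)) ^ (2 * n) := by
        gcongr
        linarith [Real.add_one_le_exp (ε / (8 * n))]
    _ = Real.exp (ε / 4) := by
        rw [← Real.exp_nat_mul]
        congr 1
        field_simp
        push_cast
        ring
    _ ≤ 1 / (1 - ε / 4) :=
        (Real.exp_bound_div_one_sub_of_interval' (by positivity) (by linarith)).le
    _ ≤ 1 + ε / 2 := by
        rw [div_le_iff₀ (by linarith)]
        nlinarith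

end DiscountedMarkov

open DiscountedMarkov

theorem stmt_4 (n : ℕ) (α ε : ℝ) (hα : α ∈ Set.Ioo (0:ℝ) 1) (hε : ε ∈ Set.Ioo (0:ℝ) 1)
    (P₁ P₂ : Matrix (Fin n) (Fin n) ℝ)
    (hP₁ : ∀ k l, 0 ≤ P₁ k l) (hP₁row : ∀ k, ∑ l, P₁ k l = 1)
    (hP₂ : ∀ k l, 0 ≤ P₂ k l) (hP₂row : ∀ k, ∑ l, P₂ k l = 1)
    (r₁ r₂ : Fin n → ℝ) (hr₁ : ∀ k, r₁ k ∈ Set.Icc (0:ℝ) 1) (i : Fin n)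
    (hA1 : ∀ k l, 0 < P₁ k l ↔ 0 < P₂ k l)
    (hA2 : ∀ k l, 0 < P₁ k l → 0 < P₂ k l →
      max (P₁ k l / P₂ k l) (P₂ k l / P₁ k l) - 1 ≤ ε / (8 * n))
    (hA3 : ∀ k, |r₁ k - r₂ k| ≤ ε / 2) :
    (1 - α) * |((1 - α • P₁)⁻¹ *ᵥ r₁) i - ((1 - α • P₂)⁻¹ *ᵥ r₂) i| ≤ ε := by
  obtain ⟨hα0, hα1⟩ := hα
  obtain ⟨hε0, hε1⟩ := hε
  have hS₁ : P₁ ∈ rowStochastic ℝ (Fin n) := mem_rowStochastic_iff_sum.mpr ⟨hP₁, hP₁row⟩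
  have hS₂ : P₂ ∈ rowStochastic ℝ (Fin n) := mem_rowStochastic_iff_sum.mpr ⟨hP₂, hP₂row⟩
  have hratio k l :=
    le_one_add_mul_of_max_div_sub_one_le (hP₁ k l) (hP₂ k l) (hA1 k l) (hA2 k l)
  have hμ₁₂ := occupancy_le_pow_mul hS₁ hS₂ hα0.le hα1 (hratio · · |>.1) (hratio · · |>.2) i
  have hμ₂₁ := occupancy_le_pow_mul hS₂ hS₁ hα0.le hα1 (hratio · · |>.2) (hratio · · |>.1) i
  rw [Fintype.card_fin] at hμ₁₂ hμ₂₁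
  set K := (1 + ε / (8 * n)) ^ (2 * n)
  have hK1 : 1 ≤ K := one_le_pow₀ (le_add_of_nonneg_right (by positivity))
  have hK := one_add_div_pow_le hε0 hε1 i.pos
  set μ₁ := occupancy α P₁ i
  set μ₂ := occupancy α P₂ i
  rw [← abs_of_pos (sub_pos.mpr hα1), ← abs_mul, mul_sub, one_sub_mul_inv_mulVec_apply,
    one_sub_mul_inv_mulVec_apply]
  calc |μ₁ ⬝ᵥ r₁ - μ₂ ⬝ᵥ r₂| ≤ |μ₁ ⬝ᵥ r₁ - μ₂ ⬝ᵥ r₁| + |μ₂ ⬝ᵥ r₁ - μ₂ ⬝ᵥ r₂| := abs_sub_le _ _ _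
    _ ≤ (K - 1) + ε / 2 := by
        have hμ₁ := occupancy_nonneg hS₁ hα0.le hα1 i
        have hμ₂ := occupancy_nonneg hS₂ hα0.le hα1 i
        have hμ₁1 := sum_occupancy hS₁ hα0.le hα1 i
        have hμ₂1 := sum_occupancy hS₂ hα0.le hα1 i
        refine add_le_add (abs_sub_le_iff.mpr ⟨?_, ?_⟩) (abs_dotProduct_sub_le hμ₂ hμ₂1 hA3)
        · exact dotProduct_sub_le_of_le_mul hμ₂ hμ₂1 hr₁ hK1 hμ₁₂
        · exact dotProduct_sub_le_of_le_mul hμ₁ hμ₁1 hr₁ hK1 hμ₂₁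
    _ ≤ ε := by linarith
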